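/- arXiv:1509.01607 — 5 statements merged into one kernel-verified Lean document; each statement's English description precedes it below -/
import Mathlib

section
/- Let d ≥ 1 and k ≥ 0 be integers and let P : ℝ^d → ℝ be a polynomial with 0 ≤ P(0) ≤ 1. Define Q : ℝ^d → ℝ by Q(x₁,…,x_d) = x₁^{2k+2} + … + x_d^{2k+2}. Then there exists a > 0 such that the function μ_a := P · exp(−aQ) satisfies −1 < μ_a(x) < 2 for all x ∈ ℝ^d. -/
private lemma abs_le_one_add_pow (k : ℕ) (t : ℝ) : |t| ≤ 1 + t ^ (2 * k + 2) := by
  have heven : Even (2 * k + 2) := ⟨k + 1, by ring⟩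
  have hnn : 0 ≤ t ^ (2 * k + 2) := heven.pow_nonneg t
  have habs : t ^ (2 * k + 2) = |t| ^ (2 * k + 2) := by
    rw [← abs_pow, abs_of_nonneg hnn]
  rcases le_or_gt |t| 1 with h | h
  · linarith
  · have : |t| ≤ |t| ^ (2 * k + 2) := le_self_pow₀ h.le (by omega)
    rw [habs]; linarith

private lemma monom_bound (d k N : ℕ) (x : Fin d → ℝ) (s : Fin d →₀ ℕ)
    (hN : ∑ i, s i ≤ N) :
    |∏ i, x i ^ s i| ≤ Real.exp (N * ∑ i, x i ^ (2 * k + 2)) := by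
  set Q := ∑ i, x i ^ (2 * k + 2) with hQdef
  have heven : Even (2 * k + 2) := ⟨k + 1, by ring⟩
  have hterm : ∀ i : Fin d, (0:ℝ) ≤ x i ^ (2 * k + 2) := fun i => heven.pow_nonneg _
  have hQ0 : 0 ≤ Q := Finset.sum_nonneg fun i _ => hterm i
  have h1 : ∀ i, |x i| ≤ 1 + Q := by
    intro i
    refine le_trans (abs_le_one_add_pow k (x i)) ?_
    have := Finset.single_le_sum (fun j (_ : j ∈ Finset.univ) => hterm j) (Finset.mem_univ i)
    linarith
  calc |∏ i, x i ^ s i| = ∏ i, |x i| ^ s i := by rw [Finset.abs_prod]; simp [abs_pow]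
    _ ≤ ∏ i, (1 + Q) ^ s i :=
        Finset.prod_le_prod (fun i _ => pow_nonneg (abs_nonneg _) _)
          (fun i _ => pow_le_pow_left₀ (abs_nonneg _) (h1 i) _)
    _ = (1 + Q) ^ (∑ i, s i) := by rw [← Finset.prod_pow_eq_pow_sum]
    _ ≤ (1 + Q) ^ N := pow_le_pow_right₀ (by linarith) hN
    _ ≤ Real.exp Q ^ N :=
        pow_le_pow_left₀ (by linarith) (by linarith [Real.add_one_le_exp Q]) N
    _ = Real.exp (N * Q) := by rw [← Real.exp_nat_mul]

/-- For a polynomial P with 0 ≤ P(0) ≤ 1 and Q(x) = ∑ xᵢ^{2k+2}, there is a > 0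
such that −1 < P·exp(−aQ) < 2 everywhere. -/
theorem stmt1 (d k : ℕ) (hd : 1 ≤ d) (P : MvPolynomial (Fin d) ℝ)
    (h0 : 0 ≤ MvPolynomial.eval (0 : Fin d → ℝ) P)
    (h1 : MvPolynomial.eval (0 : Fin d → ℝ) P ≤ 1) :
    ∃ a : ℝ, 0 < a ∧ ∀ x : Fin d → ℝ,
      (-1 < MvPolynomial.eval x P * Real.exp (-(a * ∑ i, x i ^ (2 * k + 2)))) ∧
      (MvPolynomial.eval x P * Real.exp (-(a * ∑ i, x i ^ (2 * k + 2))) < 2) := by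
  classical
  set N := P.totalDegree with hN
  set C := ∑ s ∈ P.support, |P.coeff s| with hC
  have hC0 : 0 ≤ C := Finset.sum_nonneg fun _ _ => abs_nonneg _
  -- polynomial growth bound
  have hbound : ∀ x : Fin d → ℝ,
      |MvPolynomial.eval x P| ≤ C * Real.exp (N * ∑ i, x i ^ (2 * k + 2)) := by
    intro x
    rw [MvPolynomial.eval_eq']
    calc |∑ s ∈ P.support, P.coeff s * ∏ i, x i ^ s i|
        ≤ ∑ s ∈ P.support, |P.coeff s * ∏ i, x i ^ s i| :=
          Finset.abs_sum_le_sum_abs _ _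
      _ ≤ ∑ s ∈ P.support, |P.coeff s| * Real.exp (N * ∑ i, x i ^ (2 * k + 2)) := by
          refine Finset.sum_le_sum fun s hs => ?_
          rw [abs_mul]
          refine mul_le_mul_of_nonneg_left (monom_bound d k N x s ?_) (abs_nonneg _)
          have h1 : (s.sum fun _ e => e) ≤ N := MvPolynomial.le_totalDegree hs
          have h2 : (s.sum fun _ e => e) = ∑ i, s i :=
            Finsupp.sum_fintype _ _ (fun _ => rfl)
          omega
      _ = C * Real.exp (N * ∑ i, x i ^ (2 * k + 2)) := by rw [← Finset.sum_mul]
  -- continuity at 0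
  have hcont : ContinuousAt (fun x : Fin d → ℝ => MvPolynomial.eval x P) 0 :=
    (MvPolynomial.continuous_eval P).continuousAt
  rw [Metric.continuousAt_iff] at hcont
  obtain ⟨r, hr, hball⟩ := hcont (1/2) (by norm_num)
  set q0 : ℝ := r ^ (2 * k + 2) with hq0
  have hq0pos : 0 < q0 := pow_pos hr _
  refine ⟨N + 1 + (C + N) / q0, by positivity, fun x => ?_⟩
  set a : ℝ := N + 1 + (C + N) / q0 with ha
  have hapos : 0 < a := by positivity
  set Q : ℝ := ∑ i, x i ^ (2 * k + 2) with hQ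
  have heven : Even (2 * k + 2) := ⟨k + 1, by ring⟩
  have hterm : ∀ i : Fin d, (0:ℝ) ≤ x i ^ (2 * k + 2) := fun i => heven.pow_nonneg _
  have hQ0 : 0 ≤ Q := Finset.sum_nonneg fun i _ => hterm i
  set E : ℝ := Real.exp (-(a * Q)) with hE
  have hE0 : 0 < E := Real.exp_pos _
  have hE1 : E ≤ 1 := Real.exp_le_one_iff.mpr (by nlinarith)
  by_cases hx : ∀ i, |x i| < r
  · -- near zero
    have hdist : dist x 0 < r := by
      rw [dist_pi_lt_iff hr]
      intro i
      simpa [Real.dist_eq] using hx i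
    have := hball hdist
    rw [Real.dist_eq] at this
    have hlo : -(1/2 : ℝ) < MvPolynomial.eval x P := by
      have := abs_lt.mp this; linarith
    have hhi : MvPolynomial.eval x P < 3/2 := by
      have := abs_lt.mp this; linarith
    constructor
    · nlinarith
    · nlinarith
  · -- far from zero
    push_neg at hx
    obtain ⟨i, hi⟩ := hx
    have hQge : q0 ≤ Q := by
      have h1 : r ^ (2 * k + 2) ≤ |x i| ^ (2 * k + 2) := pow_le_pow_left₀ hr.le hi _
      have h2 : |x i| ^ (2 * k + 2) = x i ^ (2 * k + 2) := by
        rw [← abs_pow, abs_of_nonneg (hterm i)]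
      have h3 := Finset.single_le_sum (fun j (_ : j ∈ Finset.univ) => hterm j) (Finset.mem_univ i)
      rw [h2] at h1
      calc q0 ≤ x i ^ (2 * k + 2) := h1
        _ ≤ Q := h3
    have key : |MvPolynomial.eval x P * E| < 1 := by
      rw [abs_mul, abs_of_pos hE0]
      calc |MvPolynomial.eval x P| * E ≤ C * Real.exp (N * Q) * E :=
            mul_le_mul_of_nonneg_right (hbound x) hE0.le
        _ = C * Real.exp ((N - a) * Q) := by
            rw [hE, mul_assoc, ← Real.exp_add]
            congr 2
            ring
        _ ≤ Real.exp C * Real.exp ((N - a) * Q) := by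
            have : C ≤ Real.exp C := by linarith [Real.add_one_le_exp C]
            exact mul_le_mul_of_nonneg_right this (Real.exp_pos _).le
        _ = Real.exp (C + (N - a) * Q) := by rw [← Real.exp_add]
        _ < 1 := by
            rw [Real.exp_lt_one_iff]
            have hsub : (a - N) * q0 = q0 + (C + N) := by
              rw [ha]; field_simp; ring
            have hdiv : (0:ℝ) ≤ (C + ↑N) / q0 := by positivity
            have hNa : (N:ℝ) - a < 0 := by rw [ha]; linarith
            have hmul : ((N:ℝ) - a) * Q ≤ ((N:ℝ) - a) * q0 := by nlinarith
            linarith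
    obtain ⟨hl, hu⟩ := abs_lt.mp key
    exact ⟨by linarith, by linarith⟩
end

section
/- Let M be a subset of ℝ³ that is constructible for the standard topology τ# (a finite union of locally closed sets), let M° denote the interior of M in ℝ³, and let τ be a topology on M such that M° is τ-open and τ-dense in M and such that τ restricted to M° equals τ# restricted to M°. Then for every subset Z ⊆ M, Z is nowhere dense in (M,τ) if and only if Z is nowhere dense in ℝ³ with the standard topology. -/
/-- A set is constructible if it is a finite union of locally closed sets. -/
def IsConstructibleSet {X : Type*} [TopologicalSpace X] (M : Set X) : Prop :=
  ∃ (n : ℕ) (U C : Fin n → Set X), (∀ i, IsOpen (U i)) ∧ (∀ i, IsClosed (C i)) ∧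
    M = ⋃ i, U i ∩ C i

section Aux

variable {X : Type*} [TopologicalSpace X]

lemma nd_mono {s t : Set X} (h : s ⊆ t) (ht : IsNowhereDense t) : IsNowhereDense s :=
  Set.subset_empty_iff.mp (ht ▸ interior_mono (closure_mono h))

lemma nd_union {s t : Set X} (hs : IsNowhereDense s) (ht : IsNowhereDense t) :
    IsNowhereDense (s ∪ t) := by
  rw [IsNowhereDense, closure_union, Set.eq_empty_iff_forall_notMem]
  intro x hx
  obtain ⟨U, hUsub, hUo, hxU⟩ := mem_interior.mp hx
  have hU1 : U \ closure t ⊆ interior (closure s) := by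
    apply interior_maximal _ (hUo.sdiff isClosed_closure)
    intro y hy
    rcases hUsub hy.1 with h | h
    · exact h
    · exact absurd h hy.2
  rw [hs] at hU1
  have hU2 : U ⊆ closure t := fun y hy => by
    by_contra h; exact hU1 ⟨hy, h⟩
  have := interior_maximal hU2 hUo hxU
  rw [ht] at this; exact this

lemma nd_iUnion : ∀ (n : ℕ) (f : Fin n → Set X), (∀ i, IsNowhereDense (f i)) →
    IsNowhereDense (⋃ i, f i)
  | 0, f, _ => by simp [isNowhereDense_empty]
  | n + 1, f, h => by
    have : (⋃ i, f i) = f 0 ∪ ⋃ i : Fin n, f i.succ := by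
      ext x; simp only [Set.mem_iUnion, Set.mem_union]
      constructor
      · rintro ⟨i, hi⟩
        rcases Fin.eq_zero_or_eq_succ i with rfl | ⟨j, rfl⟩
        · exact Or.inl hi
        · exact Or.inr ⟨j, hi⟩
      · rintro (hx | ⟨j, hj⟩)
        · exact ⟨0, hx⟩
        · exact ⟨j.succ, hj⟩
    rw [this]
    exact nd_union (h 0) (nd_iUnion n (fun i => f i.succ) (fun i => h i.succ))

lemma frontier_locallyClosed_nd {U C : Set X} (hU : IsOpen U) (hC : IsClosed C) :
    IsNowhereDense (frontier (U ∩ C)) := by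
  set L := U ∩ C with hL
  rw [IsNowhereDense, isClosed_frontier.closure_eq, Set.eq_empty_iff_forall_notMem]
  intro x hx
  set V := interior (frontier L) with hV
  have hVo : IsOpen V := isOpen_interior
  have hVsub : V ⊆ frontier L := interior_subset
  have hclL : closure L ∩ U ⊆ L := by
    intro y ⟨hy1, hy2⟩
    exact ⟨hy2, hC.closure_subset (closure_mono Set.inter_subset_right hy1)⟩
  have hVU : V ∩ U ⊆ interior L := by
    apply interior_maximal _ (hVo.inter hU)
    intro y ⟨hy1, hy2⟩
    exact hclL ⟨(hVsub hy1).1, hy2⟩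
  have hVUe : V ∩ U = ∅ := by
    rw [Set.eq_empty_iff_forall_notMem]
    intro y ⟨hy1, hy2⟩
    exact (hVsub hy1).2 (hVU ⟨hy1, hy2⟩)
  -- x ∈ V ⊆ frontier L ⊆ closure L ⊆ closure U, V open, so V meets U : contradiction
  have hxclU : x ∈ closure U :=
    closure_mono Set.inter_subset_left (frontier_subset_closure (hVsub hx))
  obtain ⟨y, hy⟩ := mem_closure_iff.mp hxclU V hVo hx
  exact absurd hy (by rw [Set.eq_empty_iff_forall_notMem] at hVUe; exact hVUe y)

lemma constructible_diff_interior_nd {M : Set X} (hM : IsConstructibleSet M) :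
    IsNowhereDense (M \ interior M) := by
  obtain ⟨n, U, C, hU, hC, rfl⟩ := hM
  set M := ⋃ i, U i ∩ C i
  apply nd_mono (t := ⋃ i, frontier (U i ∩ C i))
  · intro x ⟨hx1, hx2⟩
    obtain ⟨i, hi⟩ := Set.mem_iUnion.mp hx1
    refine Set.mem_iUnion.mpr ⟨i, subset_closure hi, fun h => hx2 ?_⟩
    exact interior_mono (Set.subset_iUnion (fun i => U i ∩ C i) i) h
  · exact nd_iUnion n _ fun i => frontier_locallyClosed_nd (hU i) (hC i)

end Aux

/-- For a constructible M ⊆ ℝ³ with a topology τ on M whose restriction to the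
interior M° agrees with the standard one, and M° τ-open and τ-dense,
Z ⊆ M is τ-nowhere dense iff it is nowhere dense in ℝ³. -/
theorem stmt3 (M : Set (Fin 3 → ℝ)) (hM : IsConstructibleSet M)
    (t : TopologicalSpace M)
    (S : Set M) (hS : S = Subtype.val ⁻¹' interior M)
    (hSopen : @IsOpen M t S) (hSdense : @Dense M t S)
    (hrestrict : ∀ V : Set M, V ⊆ S →
      (@IsOpen M t V ↔ IsOpen (Subtype.val '' V))) :
    ∀ Z : Set M, @IsNowhereDense M t Z ↔ IsNowhereDense (Subtype.val '' Z) := by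
  intro Z
  letI : TopologicalSpace ↑M := t
  have hinj : Function.Injective (Subtype.val : M → Fin 3 → ℝ) := Subtype.coe_injective
  have himgS : Subtype.val '' S = interior M := by
    rw [hS, Subtype.image_preimage_coe]
    exact Set.inter_eq_right.mpr interior_subset
  constructor
  · -- τ-nowhere dense → nowhere dense in ℝ³
    intro hZ
    rw [IsNowhereDense, Set.eq_empty_iff_forall_notMem]
    intro x hx
    set A := Subtype.val '' (Z ∩ S) with hA
    set B := Subtype.val '' (Z \ S) with hB
    have hAB : Subtype.val '' Z = A ∪ B := by
      rw [hA, hB, ← Set.image_union, Set.inter_union_diff]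
    have hBnd : IsNowhereDense B := by
      apply nd_mono (t := M \ interior M) _ (constructible_diff_interior_nd hM)
      rintro y ⟨z, ⟨hz1, hz2⟩, rfl⟩
      exact ⟨z.2, fun h => hz2 (hS ▸ h)⟩
    set Uo := interior (closure (Subtype.val '' Z)) with hUo
    have hUoo : IsOpen Uo := isOpen_interior
    have hWo : IsOpen (Uo \ closure B) := hUoo.sdiff isClosed_closure
    have hWne : (Uo \ closure B).Nonempty := by
      rw [Set.diff_nonempty]
      intro h
      have h2 := interior_maximal h hUoo
      rw [show interior (closure B) = ∅ from hBnd] at h2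
      exact h2 hx
    have hWclA : Uo \ closure B ⊆ closure A := by
      intro y hy
      have : y ∈ closure A ∪ closure B := by
        rw [← closure_union, ← hAB]
        exact interior_subset hy.1
      rcases this with h | h
      · exact h
      · exact absurd h hy.2
    have hclIntM : Uo \ closure B ⊆ closure (interior M) := by
      refine hWclA.trans (closure_mono ?_)
      rintro y ⟨z, ⟨_, hz2⟩, rfl⟩
      rw [hS] at hz2
      exact hz2
    obtain ⟨y0, hy0⟩ := hWne
    obtain ⟨p, hp⟩ := mem_closure_iff.mp (hclIntM hy0) _ hWo hy0
    set W' := (Uo \ closure B) ∩ interior M with hW'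
    have hW'o : IsOpen W' := hWo.inter isOpen_interior
    have hW'clA : W' ⊆ closure A := fun y hy => hWclA hy.1
    have hW'M : W' ⊆ M := fun y hy => interior_subset hy.2
    set V : Set M := Subtype.val ⁻¹' W' with hVdef
    have hVS : V ⊆ S := by
      intro v hv
      rw [hS]
      exact hv.2
    have hVimg : Subtype.val '' V = W' := by
      rw [hVdef, Subtype.image_preimage_coe]
      exact Set.inter_eq_right.mpr hW'M
    have hVopen : IsOpen V := (hrestrict V hVS).mpr (hVimg ▸ hW'o)
    have hVne : V.Nonempty := ⟨⟨p, hW'M hp⟩, hp⟩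
    have hVcl : V ⊆ closure Z := by
      intro v hv
      rw [mem_closure_iff]
      intro O hO hvO
      have hOV : IsOpen (O ∩ V) := hO.inter hVopen
      have hOVS : O ∩ V ⊆ S := fun w hw => hVS hw.2
      have hOVimg : IsOpen (Subtype.val '' (O ∩ V)) := (hrestrict _ hOVS).mp hOV
      have hvOV : v.val ∈ Subtype.val '' (O ∩ V) := ⟨v, ⟨hvO, hv⟩, rfl⟩
      have hvclA : v.val ∈ closure A := hW'clA hv
      obtain ⟨q, hq1, hq2⟩ := mem_closure_iff.mp hvclA _ hOVimg hvOV
      obtain ⟨w, hw, hwq⟩ := hq1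
      obtain ⟨z, hz, hzq⟩ := hq2
      have : w = z := hinj (hwq.trans hzq.symm)
      exact ⟨w, hw.1, this ▸ hz.1⟩
    have hfin := interior_maximal hVcl hVopen
    rw [show interior (closure Z) = ∅ from hZ] at hfin
    obtain ⟨v, hv⟩ := hVne
    exact hfin hv
  · -- nowhere dense in ℝ³ → τ-nowhere dense
    intro hZ
    rw [IsNowhereDense, Set.eq_empty_iff_forall_notMem]
    intro v0 hv0
    set O := interior (closure Z) with hO
    have hOo : IsOpen O := isOpen_interior
    have hOS : IsOpen (O ∩ S) := hOo.inter hSopen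
    have hOSne : (O ∩ S).Nonempty := by
      have h := hSdense.inter_open_nonempty O hOo ⟨v0, hv0⟩
      exact h.imp fun x hx => ⟨hx.1, hx.2⟩
    have hOSsub : O ∩ S ⊆ S := Set.inter_subset_right
    have hG : IsOpen (Subtype.val '' (O ∩ S)) := (hrestrict _ hOSsub).mp hOS
    have hGcl : Subtype.val '' (O ∩ S) ⊆ closure (Subtype.val '' Z) := by
      rintro x ⟨v, hv, rfl⟩
      rw [mem_closure_iff]
      intro N hN hxN
      have hP1S : (Subtype.val ⁻¹' N ∩ S) ⊆ S := Set.inter_subset_right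
      have hP1img : Subtype.val '' (Subtype.val ⁻¹' N ∩ S) = N ∩ interior M := by
        rw [Set.image_inter hinj, Subtype.image_preimage_coe, himgS, Set.inter_assoc,
          Set.inter_eq_right.mpr (fun y hy => interior_subset hy.2)]
      have hP1o : IsOpen (Subtype.val ⁻¹' N ∩ S) := by
        rw [hrestrict _ hP1S, hP1img]
        exact hN.inter isOpen_interior
      have hPo : IsOpen ((Subtype.val ⁻¹' N ∩ S) ∩ O) := hP1o.inter hOo
      have hvP : v ∈ (Subtype.val ⁻¹' N ∩ S) ∩ O := ⟨⟨hxN, hv.2⟩, hv.1⟩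
      have hvclZ : v ∈ closure Z := interior_subset hv.1
      obtain ⟨z, hz1, hz2⟩ := mem_closure_iff.mp hvclZ _ hPo hvP
      exact ⟨z.val, hz1.1.1, ⟨z, hz2, rfl⟩⟩
    have hfin := interior_maximal hGcl hG
    rw [show interior (closure (Subtype.val '' Z)) = ∅ from hZ] at hfin
    obtain ⟨v, hv⟩ := hOSne
    exact hfin ⟨v, hv, rfl⟩
end

section
/- Let M ⊆ ℝ³ be constructible, with interior M° in ℝ³, and let τ be a topology on M such that M° is τ-open and τ-dense in M and τ|M° = τ#|M°, where τ# is the standard topology. Then for every Z ⊆ M, Z is meager in (M,τ) if and only if Z is meager in ℝ³. -/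
/-!
On the open set `S` the two topologies agree, so `val : S → ℝ³` is an open embedding onto
`interior M`, and open embeddings preserve and reflect meagreness. Off `S` nothing is lost on
either side: `Sᶜ` is τ-nowhere dense, being the complement of a τ-open dense set, and
`M \ interior M` is meagre in `ℝ³`, because for a constructible `M = ⋃ Uᵢ ∩ Cᵢ` it is covered by
the nowhere dense frontiers of the closed sets `Cᵢ`.
-/

open Set Topology

variable {X Y : Type*} [TopologicalSpace X] [TopologicalSpace Y]

lemma isMeagre_iff_isMeagre_inter_of_isMeagre_diff {s t : Set X} (h : IsMeagre (s \ t)) :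
    IsMeagre s ↔ IsMeagre (s ∩ t) :=
  ⟨IsMeagre.inter, fun hst => inter_union_sdiff s t ▸ hst.union h⟩

lemma Topology.IsOpenEmbedding.isMeagre_image_iff {f : X → Y} (hf : IsOpenEmbedding f)
    {s : Set X} : IsMeagre (f '' s) ↔ IsMeagre s := by
  refine ⟨fun h => ?_, hf.isInducing.isMeagre_image⟩
  simpa [hf.injective.preimage_image] using h.preimage_of_isOpenMap hf.continuous hf.isOpenMap

lemma IsOpen.isMeagre_inter_iff_isMeagre_image {f : X → Y} {S : Set X} (hS : IsOpen S)
    (hf : IsOpenEmbedding (S.domRestrict f)) (Z : Set X) :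
    IsMeagre (Z ∩ S) ↔ IsMeagre (f '' (Z ∩ S)) := by
  have hZS : Z ∩ S = Subtype.val '' (Subtype.val ⁻¹' Z : Set S) := by
    rw [Subtype.image_preimage_coe, inter_comm]
  rw [hZS, hS.isOpenEmbedding_subtypeVal.isMeagre_image_iff, ← image_comp,
    ← hf.isMeagre_image_iff]
  rfl

lemma Set.InjOn.isOpenEmbedding_domRestrict {f : X → Y} {S : Set X} (hf : InjOn f S)
    (hS : IsOpen S) (h : ∀ V ⊆ S, IsOpen V ↔ IsOpen (f '' V)) :
    IsOpenEmbedding (S.domRestrict f) := by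
  have hcont : ContinuousOn f S := by
    refine (continuousOn_open_iff hS).2 fun O hO => (h _ inter_subset_left).2 ?_
    rw [image_inter_preimage]
    exact ((h S subset_rfl).1 hS).inter hO
  have hopen : IsOpenMap (S.domRestrict f) := fun W hW => by
    rw [domRestrict_eq, image_comp]
    exact (h _ (Subtype.coe_image_subset S W)).1 (hS.isOpenMap_subtype_val W hW)
  exact .of_continuous_injective_isOpenMap (continuousOn_iff_continuous_domRestrict.1 hcont)
    hf.injective hopen

lemma IsOpen.isNowhereDense_compl_of_dense {S : Set X} (hS : IsOpen S) (hd : Dense S) :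
    IsNowhereDense Sᶜ :=
  ((isClosed_isNowhereDense_iff_compl (s := Sᶜ)).2 ⟨by rwa [compl_compl], by rwa [compl_compl]⟩).2

lemma IsConstructibleSet.isMeagre_diff_interior {M : Set X} (hM : IsConstructibleSet M) :
    IsMeagre (M \ interior M) := by
  obtain ⟨n, U, C, hU, hC, rfl⟩ := hM
  refine IsMeagre.mono (s := ⋃ i, frontier (C i)) ?_ (isMeagre_iUnion fun i => ?_)
  · rintro x ⟨hx, hxint⟩
    obtain ⟨i, hxU, hxC⟩ := mem_iUnion.1 hx
    refine mem_iUnion.2 ⟨i, subset_closure hxC, fun hxCint => hxint ?_⟩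
    refine interior_maximal ?_ ((hU i).inter isOpen_interior) ⟨hxU, hxCint⟩
    exact (inter_subset_inter_right _ interior_subset).trans (subset_iUnion (fun j => U j ∩ C j) i)
  · exact (isClosed_frontier.isNowhereDense_iff.2 (interior_frontier (hC i))).isMeagre

/-- For a constructible M ⊆ ℝ³ with a topology τ on M whose restriction to the
interior M° agrees with the standard one, and M° τ-open and τ-dense,
Z ⊆ M is τ-meager iff it is meager in ℝ³. -/
theorem stmt4 (M : Set (Fin 3 → ℝ)) (hM : IsConstructibleSet M)
    (t : TopologicalSpace M)
    (S : Set M) (hS : S = Subtype.val ⁻¹' interior M)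
    (hSopen : @IsOpen M t S) (hSdense : @Dense M t S)
    (hrestrict : ∀ V : Set M, V ⊆ S →
      (@IsOpen M t V ↔ IsOpen (Subtype.val '' V))) :
    ∀ Z : Set M, @IsMeagre M t Z ↔ IsMeagre (Subtype.val '' Z) := by
  intro Z
  let := t
  have hemb : IsOpenEmbedding (S.domRestrict Subtype.val) :=
    Subtype.val_injective.injOn.isOpenEmbedding_domRestrict hSopen hrestrict
  have himage : Subtype.val '' (Z ∩ S) = Subtype.val '' Z ∩ interior M := by
    rw [image_inter Subtype.val_injective, hS, image_preimage_eq_inter_range,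
      Subtype.range_coe, inter_eq_left.2 interior_subset]
  have hdiff : IsMeagre (Subtype.val '' Z \ interior M) :=
    hM.isMeagre_diff_interior.mono (sdiff_subset_sdiff_left (Subtype.coe_image_subset M Z))
  rw [isMeagre_iff_isMeagre_inter_of_isMeagre_diff
      ((hSopen.isNowhereDense_compl_of_dense hSdense).isMeagre.mono (sdiff_subset_compl _ _)),
    hSopen.isMeagre_inter_iff_isMeagre_image hemb, himage,
    ← isMeagre_iff_isMeagre_inter_of_isMeagre_diff hdiff]
end

section
/- Let M be a real-analytic manifold, let V be a complete real-analytic (or smooth) vector field on M with flow Φ, let N ≥ 1, and suppose V agrees with a fixed vector field E on the region R_N := {p : x(p) > N−1} (in coordinates where E generates translation in the first coordinate, i.e., Φᴱ_t(x,y,z) = (x+t,y,z) on ℝ³). Let σ ∈ M. Then the set {Φ_t(σ) : t ∈ ℝ} ∩ ({N} × ℝ²) contains at most one point. -/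
open Set

lemma key_translate (N : ℝ)
    (Φ : ℝ → ℝ × ℝ × ℝ → ℝ × ℝ × ℝ)
    (hΦ0 : ∀ p, Φ 0 p = p)
    (hΦcont : ∀ p, Continuous fun t => Φ t p)
    (hE : ∀ p t, N - 1 < (Φ t p).1 →
      HasDerivAt (fun s => Φ s p) ((1 : ℝ), (0 : ℝ), (0 : ℝ)) t)
    (p : ℝ × ℝ × ℝ) (hp : p.1 = N) :
    ∀ s : ℝ, 0 ≤ s → Φ s p = p + s • ((1 : ℝ), (0 : ℝ), (0 : ℝ)) := by
  intro s₀ hs₀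
  set e : ℝ × ℝ × ℝ := ((1 : ℝ), (0 : ℝ), (0 : ℝ)) with he
  set g : ℝ → ℝ × ℝ × ℝ := fun u => p + u • e with hg
  have hgcont : Continuous g := by continuity
  have hgderiv : ∀ u : ℝ, HasDerivAt g e u := by
    intro u
    have : HasDerivAt (fun y : ℝ => y • e) ((1 : ℝ) • e) u :=
      (hasDerivAt_id u).smul_const e
    simpa [hg] using this.const_add p
  set G : Set ℝ := {s | s ∈ Icc 0 s₀ ∧ ∀ u ∈ Icc 0 s, Φ u p = g u} with hG
  have h0G : (0 : ℝ) ∈ G := by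
    refine ⟨⟨le_refl 0, hs₀⟩, ?_⟩
    intro u hu
    have hu0 : u = 0 := le_antisymm hu.2 hu.1
    simp [hu0, hΦ0, hg]
  have hGne : G.Nonempty := ⟨0, h0G⟩
  have hGbdd : BddAbove G := ⟨s₀, fun x hx => hx.1.2⟩
  set c := sSup G with hc
  have hc0 : 0 ≤ c := le_csSup hGbdd h0G
  have hcs : c ≤ s₀ := csSup_le hGne fun x hx => hx.1.2
  have hIco : ∀ u ∈ Ico 0 c, Φ u p = g u := by
    intro u hu
    obtain ⟨s, hsG, hus⟩ := exists_lt_of_lt_csSup hGne hu.2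
    exact hsG.2 u ⟨hu.1, hus.le⟩
  have hcc : Φ c p = g c := by
    rcases eq_or_lt_of_le hc0 with h | h
    · simp [← h, hΦ0, hg]
    · have hcl : IsClosed {u : ℝ | Φ u p = g u} :=
        isClosed_eq (hΦcont p) hgcont
      have hsub : Ico 0 c ⊆ {u : ℝ | Φ u p = g u} := hIco
      have := closure_minimal hsub hcl
      have hcmem : c ∈ closure (Ico 0 c) := by
        rw [closure_Ico h.ne]
        exact ⟨hc0, le_refl c⟩
      exact this hcmem
  have hIcc : ∀ u ∈ Icc 0 c, Φ u p = g u := by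
    intro u hu
    rcases eq_or_lt_of_le hu.2 with h | h
    · rw [h]; exact hcc
    · exact hIco u ⟨hu.1, h⟩
  -- show c = s₀
  rcases eq_or_lt_of_le hcs with hce | hclt
  · have := hIcc s₀ ⟨hs₀, hce.ge⟩
    simpa [hg] using this
  · exfalso
    -- x-coordinate at c is N + c > N - 1
    have hx : N - 1 < (Φ c p).1 := by
      rw [hcc]
      simp only [hg, he, Prod.fst_add, Prod.smul_fst, smul_eq_mul, mul_one, hp]
      linarith
    have hxc : Continuous fun u => (Φ u p).1 := (continuous_fst).comp (hΦcont p)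
    have hopen : IsOpen {u : ℝ | N - 1 < (Φ u p).1} :=
      isOpen_lt continuous_const hxc
    obtain ⟨δ, hδ, hball⟩ := Metric.isOpen_iff.1 hopen c hx
    set c' := min (c + δ / 2) s₀ with hc'
    have hcc' : c < c' := lt_min (by linarith) hclt
    have hreg : ∀ u ∈ Ico c c', N - 1 < (Φ u p).1 := by
      intro u hu
      apply hball
      rw [Metric.mem_ball, Real.dist_eq, abs_of_nonneg (by linarith [hu.1])]
      have : u < c + δ / 2 := lt_of_lt_of_le hu.2 (min_le_left _ _)
      linarith
    have heq : ∀ u ∈ Icc c c', Φ u p = g u := by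
      apply eq_of_has_deriv_right_eq (f' := fun _ => e)
      · intro u hu
        exact (hE p u (hreg u hu)).hasDerivWithinAt
      · intro u hu
        exact (hgderiv u).hasDerivWithinAt
      · exact (hΦcont p).continuousOn
      · exact hgcont.continuousOn
      · exact hcc
    have hc'G : c' ∈ G := by
      refine ⟨⟨le_trans hc0 hcc'.le, min_le_right _ _⟩, ?_⟩
      intro u hu
      rcases le_or_gt u c with h | h
      · exact hIcc u ⟨hu.1, h⟩
      · exact heq u ⟨h.le, hu.2⟩
    have : c' ≤ c := le_csSup hGbdd hc'G
    exact absurd this (not_le.2 hcc')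

/-- If a complete flow Φ on (a subset of) ℝ³ satisfies Φ' = E = (1,0,0) on the
region R_N = {x > N−1}, then any orbit meets the slice {N} × ℝ² in at most
one point. -/
theorem stmt7 (N : ℝ) (hN : 1 ≤ N)
    (Φ : ℝ → ℝ × ℝ × ℝ → ℝ × ℝ × ℝ)
    (hΦ0 : ∀ p, Φ 0 p = p)
    (hΦadd : ∀ s t p, Φ (s + t) p = Φ s (Φ t p))
    (hΦcont : ∀ p, Continuous fun t => Φ t p)
    (hE : ∀ p t, N - 1 < (Φ t p).1 →
      HasDerivAt (fun s => Φ s p) ((1 : ℝ), (0 : ℝ), (0 : ℝ)) t)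
    (σ : ℝ × ℝ × ℝ) :
    ∀ w w' : ℝ × ℝ, (∃ t, Φ t σ = (N, w)) → (∃ t', Φ t' σ = (N, w')) →
      w = w' := by
  intro w w' ⟨t, ht⟩ ⟨t', ht'⟩
  have main : ∀ (a b : ℝ) (u v : ℝ × ℝ), a ≤ b → Φ a σ = (N, u) → Φ b σ = (N, v) →
      u = v := by
    intro a b u v hab ha hb
    have hkey := key_translate N Φ hΦ0 hΦcont hE (N, u) rfl (b - a) (by linarith)
    have : Φ b σ = Φ (b - a) (Φ a σ) := by
      rw [← hΦadd]; ring_nf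
    rw [ha, hkey] at this
    rw [hb] at this
    have h1 : N = N + (b - a) * 1 := congrArg Prod.fst this
    have hba : b = a := by linarith
    rw [hba] at hb
    rw [ha] at hb
    exact (Prod.mk.injEq _ _ _ _ ▸ hb).2
  rcases le_total t t' with h | h
  · exact main t t' w w' h ht ht'
  · exact (main t' t w' w h ht' ht).symm
end

section
/- Let ψ : ℝ² → ℝ² be the time-one flow of the vector field H(y,z) = q₀(y,z)ᵏ · (y,−z), where q₀(y,z) = 1 − exp(−y²−z²) and k ≥ 1. Then ψ fixes (0,0), maps the horizontal axis ℝ×{0} to itself and the vertical axis {0}×ℝ to itself, and for every v ∈ ℝ² not on the vertical axis, ‖ψᵐ(v)‖ → ∞ as m → ∞. -/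
/-!
Along a trajectory of `a(p) • (y, -z)` with a scalar factor `a`, the coordinates solve the linear
equations `y' = a y` and `z' = -a z`, so the trajectory through `(y, z)` is
`(y e^{A(t)}, z e^{-A(t)})` with `A(t) = ∫₀ᵗ a`. This keeps both axes invariant. For `a = q₀ᵏ`,
`A` is nondecreasing, so for `t ≥ 0` the `y`-coordinate never shrinks; then `q₀ᵏ` stays above
`q₀(y, 0)ᵏ > 0` when `y ≠ 0`, so `A(t)` grows at least linearly and `|y e^{A(t)}| → ∞`.
-/

/-- q₀(y,z) = 1 − exp(−y²−z²). -/
noncomputable def q0 : ℝ × ℝ → ℝ := fun p => 1 - Real.exp (-p.1 ^ 2 - p.2 ^ 2)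

/-- The vector field H = q₀ᵏ · H₀, where H₀(y,z) = (y,−z). -/
noncomputable def Hfield (k : ℕ) : ℝ × ℝ → ℝ × ℝ :=
  fun p => (q0 p) ^ k • ((p.1, -p.2) : ℝ × ℝ)

open Filter Real

lemma q0_nonneg (p : ℝ × ℝ) : 0 ≤ q0 p := by
  unfold q0
  linarith [exp_le_one_iff.2 (by nlinarith [sq_nonneg p.1, sq_nonneg p.2] :
    -p.1 ^ 2 - p.2 ^ 2 ≤ 0)]

lemma q0_le_q0 {p q : ℝ × ℝ} (h : p.1 ^ 2 + p.2 ^ 2 ≤ q.1 ^ 2 + q.2 ^ 2) : q0 p ≤ q0 q := by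
  unfold q0
  linarith [exp_le_exp.2 (by linarith : -q.1 ^ 2 - q.2 ^ 2 ≤ -p.1 ^ 2 - p.2 ^ 2)]

lemma q0_pos {p : ℝ × ℝ} (hp : p ≠ 0) : 0 < q0 p := by
  have hsq : 0 < p.1 ^ 2 + p.2 ^ 2 := by
    rcases p with ⟨y, z⟩
    rcases not_and_or.1 (mt Prod.mk_eq_zero.2 hp) with hy | hz
    · simp only; positivity
    · simp only; positivity
  unfold q0
  linarith [exp_lt_one_iff.2 (by linarith : -p.1 ^ 2 - p.2 ^ 2 < 0)]

lemma continuous_q0 : Continuous q0 := by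
  unfold q0; fun_prop

lemma eq_mul_exp_integral_of_hasDerivAt {f b : ℝ → ℝ} (hb : Continuous b)
    (hf : ∀ t, HasDerivAt f (b t * f t) t) (t : ℝ) :
    f t = f 0 * exp (∫ s in (0 : ℝ)..t, b s) := by
  set B : ℝ → ℝ := fun t => ∫ s in (0 : ℝ)..t, b s
  have hB : ∀ t, HasDerivAt B (b t) t := fun t => (hb.integral_hasStrictDerivAt 0 t).hasDerivAt
  have hg : ∀ t, HasDerivAt (fun s => f s * exp (-B s)) 0 t := fun t =>
    ((hf t).mul (hB t).neg.exp).congr_deriv (by ring)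
  have hconst : f t * exp (-B t) = f 0 * exp (-B 0) :=
    is_const_of_deriv_eq_zero (fun s => (hg s).differentiableAt) (fun s => (hg s).deriv) t 0
  simp only [B, intervalIntegral.integral_same, neg_zero, exp_zero, mul_one] at hconst
  rw [← hconst, mul_assoc, ← exp_add, neg_add_cancel, exp_zero, mul_one]

lemma eq_exp_integral_of_hasDerivAt_smul {a : ℝ × ℝ → ℝ} {γ : ℝ → ℝ × ℝ} (ha : Continuous a)
    (hγ : ∀ t, HasDerivAt γ (a (γ t) • ((γ t).1, -(γ t).2)) t) (t : ℝ) :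
    γ t = ((γ 0).1 * exp (∫ s in (0 : ℝ)..t, a (γ s)),
      (γ 0).2 * exp (-∫ s in (0 : ℝ)..t, a (γ s))) := by
  have hcont : Continuous (fun s => a (γ s)) :=
    ha.comp (continuous_iff_continuousAt.2 fun t => (hγ t).continuousAt)
  have h1 : ∀ t, HasDerivAt (fun s => (γ s).1) (a (γ t) * (γ t).1) t := fun t => by
    have h := hasFDerivAt_fst.comp_hasDerivAt t (hγ t)
    simp only [ContinuousLinearMap.coe_fst', Prod.smul_mk, smul_eq_mul] at h
    exact h
  have h2 : ∀ t, HasDerivAt (fun s => (γ s).2) (-a (γ t) * (γ t).2) t := fun t => by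
    have h := hasFDerivAt_snd.comp_hasDerivAt t (hγ t)
    simp only [ContinuousLinearMap.coe_snd', Prod.smul_mk, smul_eq_mul, mul_neg, ← neg_mul] at h
    exact h
  rw [← intervalIntegral.integral_neg]
  exact Prod.ext (eq_mul_exp_integral_of_hasDerivAt hcont h1 t)
    (eq_mul_exp_integral_of_hasDerivAt hcont.neg h2 t)

lemma iterate_flow_one_eq {α : Type*} {Φ : ℝ → α → α} (hΦ0 : ∀ p, Φ 0 p = p)
    (hΦadd : ∀ s t p, Φ (s + t) p = Φ s (Φ t p)) (m : ℕ) : (Φ 1)^[m] = Φ m := by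
  induction m with
  | zero => funext p; simp [hΦ0]
  | succ m ih =>
    funext p
    rw [Function.iterate_succ_apply', ih, ← hΦadd, Nat.cast_succ, add_comm]

lemma surjective_flow_one {α : Type*} {Φ : ℝ → α → α} (hΦ0 : ∀ p, Φ 0 p = p)
    (hΦadd : ∀ s t p, Φ (s + t) p = Φ s (Φ t p)) : Function.Surjective (Φ 1) := fun p =>
  ⟨Φ (-1) p, by rw [← hΦadd, add_neg_cancel, hΦ0]⟩

section Flow

variable {k : ℕ} {Φ : ℝ → ℝ × ℝ → ℝ × ℝ} (hΦ0 : ∀ p, Φ 0 p = p)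
  (hΦderiv : ∀ p t, HasDerivAt (fun s => Φ s p) (Hfield k (Φ t p)) t)
include hΦ0 hΦderiv

lemma flow_eq_exp_integral (p : ℝ × ℝ) (t : ℝ) :
    Φ t p = (p.1 * exp (∫ s in (0 : ℝ)..t, q0 (Φ s p) ^ k),
      p.2 * exp (-∫ s in (0 : ℝ)..t, q0 (Φ s p) ^ k)) := by
  have h := eq_exp_integral_of_hasDerivAt_smul (continuous_q0.pow k) (hΦderiv p) t
  rwa [hΦ0] at h

lemma preimage_flow_setOf_fst_eq_zero (t : ℝ) :
    Φ t ⁻¹' {p | p.1 = 0} = {p | p.1 = 0} := by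
  ext p
  simp [flow_eq_exp_integral hΦ0 hΦderiv p t, exp_ne_zero]

lemma preimage_flow_setOf_snd_eq_zero (t : ℝ) :
    Φ t ⁻¹' {p | p.2 = 0} = {p | p.2 = 0} := by
  ext p
  simp [flow_eq_exp_integral hΦ0 hΦderiv p t, exp_ne_zero]

lemma tendsto_norm_flow_atTop {v : ℝ × ℝ} (hv : v.1 ≠ 0) :
    Tendsto (fun t => ‖Φ t v‖) atTop atTop := by
  set A : ℝ → ℝ := fun t => ∫ s in (0 : ℝ)..t, q0 (Φ s v) ^ k
  set c := q0 (v.1, 0) ^ k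
  have hc : 0 < c := pow_pos (q0_pos (by simp [hv])) k
  have hA_nonneg : ∀ t, 0 ≤ t → 0 ≤ A t := fun t ht =>
    intervalIntegral.integral_nonneg ht fun s _ => pow_nonneg (q0_nonneg _) k
  have hfst : ∀ t, (Φ t v).1 = v.1 * exp (A t) := fun t => by
    rw [flow_eq_exp_integral hΦ0 hΦderiv v t]
  have hc_le : ∀ s, 0 ≤ s → c ≤ q0 (Φ s v) ^ k := by
    intro s hs
    have hsq : v.1 ^ 2 ≤ (Φ s v).1 ^ 2 := by
      rw [hfst, mul_pow]
      exact le_mul_of_one_le_right (sq_nonneg _) (one_le_pow₀ (one_le_exp (hA_nonneg s hs)))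
    refine pow_le_pow_left₀ (q0_nonneg _) (q0_le_q0 ?_) k
    nlinarith [sq_nonneg (Φ s v).2]
  have hA_ge : ∀ t, 0 ≤ t → c * t ≤ A t := by
    intro t ht
    have hint : Continuous fun s => q0 (Φ s v) ^ k :=
      (continuous_q0.comp (continuous_iff_continuousAt.2 fun s => (hΦderiv v s).continuousAt)).pow k
    calc c * t = ∫ _ in (0 : ℝ)..t, c := by simp [mul_comm]
      _ ≤ A t := intervalIntegral.integral_mono_on ht intervalIntegrable_const
          (hint.intervalIntegrable 0 t) fun s hs => hc_le s hs.1
  have hbound : ∀ t, 0 ≤ t → |v.1| * exp (c * t) ≤ ‖Φ t v‖ := by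
    intro t ht
    calc |v.1| * exp (c * t) ≤ |v.1| * exp (A t) := by gcongr; exact hA_ge t ht
      _ = |(Φ t v).1| := by rw [hfst, abs_mul, abs_of_pos (exp_pos _)]
      _ ≤ ‖Φ t v‖ := (Real.norm_eq_abs _).symm.trans_le (norm_fst_le _)
  refine tendsto_atTop_mono' _ ((eventually_ge_atTop 0).mono hbound) ?_
  exact (tendsto_exp_atTop.comp (tendsto_id.const_mul_atTop hc)).const_mul_atTop (abs_pos.2 hv)

end Flow

theorem stmt14_general (k : ℕ)
    (Φ : ℝ → ℝ × ℝ → ℝ × ℝ)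
    (hΦ0 : ∀ p, Φ 0 p = p)
    (hΦadd : ∀ s t p, Φ (s + t) p = Φ s (Φ t p))
    (hΦderiv : ∀ p t, HasDerivAt (fun s => Φ s p) (Hfield k (Φ t p)) t)
    (ψ : ℝ × ℝ → ℝ × ℝ) (hψ : ψ = Φ 1) :
    ψ (0, 0) = (0, 0) ∧
    ψ '' {p : ℝ × ℝ | p.2 = 0} = {p : ℝ × ℝ | p.2 = 0} ∧
    ψ '' {p : ℝ × ℝ | p.1 = 0} = {p : ℝ × ℝ | p.1 = 0} ∧
    (∀ v : ℝ × ℝ, v.1 ≠ 0 →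
      Filter.Tendsto (fun m => ‖ψ^[m] v‖) Filter.atTop Filter.atTop) := by
  subst hψ
  have hsurj := surjective_flow_one hΦ0 hΦadd
  refine ⟨?_, ?_, ?_, fun v hv => ?_⟩
  · simpa using flow_eq_exp_integral hΦ0 hΦderiv (0, 0) 1
  · simpa only [preimage_flow_setOf_snd_eq_zero hΦ0 hΦderiv] using
      Set.image_preimage_eq {p : ℝ × ℝ | p.2 = 0} hsurj
  · simpa only [preimage_flow_setOf_fst_eq_zero hΦ0 hΦderiv] using
      Set.image_preimage_eq {p : ℝ × ℝ | p.1 = 0} hsurj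
  · simp_rw [iterate_flow_one_eq hΦ0 hΦadd]
    exact (tendsto_norm_flow_atTop hΦ0 hΦderiv hv).comp tendsto_natCast_atTop_atTop

/-- The time-one map ψ of the flow of H = q₀ᵏ·H₀ fixes the origin, preserves
the horizontal and vertical axes, and every point off the vertical axis
escapes to infinity under forward iteration of ψ. -/
theorem stmt14 (k : ℕ) (hk : 1 ≤ k)
    (Φ : ℝ → ℝ × ℝ → ℝ × ℝ)
    (hΦ0 : ∀ p, Φ 0 p = p)
    (hΦadd : ∀ s t p, Φ (s + t) p = Φ s (Φ t p))
    (hΦderiv : ∀ p t, HasDerivAt (fun s => Φ s p) (Hfield k (Φ t p)) t)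
    (ψ : ℝ × ℝ → ℝ × ℝ) (hψ : ψ = Φ 1) :
    ψ (0, 0) = (0, 0) ∧
    ψ '' {p : ℝ × ℝ | p.2 = 0} = {p : ℝ × ℝ | p.2 = 0} ∧
    ψ '' {p : ℝ × ℝ | p.1 = 0} = {p : ℝ × ℝ | p.1 = 0} ∧
    (∀ v : ℝ × ℝ, v.1 ≠ 0 →
      Filter.Tendsto (fun m => ‖ψ^[m] v‖) Filter.atTop Filter.atTop) :=
  stmt14_general k Φ hΦ0 hΦadd hΦderiv ψ hψ
end
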